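/- For propositional formulas φ₁ and φ₂ over atoms 𝒫, the equivalence φ₁ ↔ φ₂ holds in every HT-interpretation (i.e., ⟨H,T⟩ ⊨ φ₁ iff ⟨H,T⟩ ⊨ φ₂ for all HT-interpretations ⟨H,T⟩) if and only if σ*(φ₁) ↔ σ*(φ₂) is satisfied by every classical interpretation I over 𝒫 ∪ 𝒫′ with I ⊨ {p → p′ | p ∈ 𝒫}. -/

import Mathlib

/-- Propositional formulas over atoms of type `α`. -/
inductive Form (α : Type) : Type where
  | bot  : Form α
  | top  : Form α
  | atom : α → Form α
  | neg  : Form α → Form α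
  | conj : Form α → Form α → Form α
  | disj : Form α → Form α → Form α
  | impl : Form α → Form α → Form α

/-- Classical satisfaction by a valuation `I` (atom true iff it is in `I`). -/
def cSat {α : Type} (I : Set α) : Form α → Prop
  | .bot => False
  | .top => True
  | .atom a => a ∈ I
  | .neg φ => ¬ cSat I φ
  | .conj φ ψ => cSat I φ ∧ cSat I ψ
  | .disj φ ψ => cSat I φ ∨ cSat I ψ
  | .impl φ ψ => cSat I φ → cSat I ψ

/-- Satisfaction in the logic of here-and-there by a pair `⟨H,T⟩`. -/
def htSat {α : Type} (H T : Set α) : Form α → Prop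
  | .bot => False
  | .top => True
  | .atom a => a ∈ H
  | .neg φ => ¬ htSat T T φ
  | .conj φ ψ => htSat H T φ ∧ htSat H T ψ
  | .disj φ ψ => htSat H T φ ∨ htSat H T ψ
  | .impl φ ψ => (htSat H T φ → htSat H T ψ) ∧ (htSat T T φ → htSat T T ψ)

/-- Renaming of atoms in a formula. -/
def Form.map {α β : Type} (f : α → β) : Form α → Form β
  | .bot => .bot
  | .top => .top
  | .atom a => .atom (f a)
  | .neg φ => .neg (φ.map f)
  | .conj φ ψ => .conj (φ.map f) (ψ.map f)
  | .disj φ ψ => .disj (φ.map f) (ψ.map f)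
  | .impl φ ψ => .impl (φ.map f) (ψ.map f)

/-- The unprimed copy of a formula over `𝒫` in the alphabet `𝒫 ∪ 𝒫′` (modelled as `α ⊕ α`,
where `Sum.inl a` is the atom `a` and `Sum.inr a` is its primed copy `a′`). -/
def unprimed {α : Type} (φ : Form α) : Form (α ⊕ α) := φ.map Sum.inl

/-- The primed copy `φ′` of a formula over `𝒫` (every atom replaced by its primed copy). -/
def primed {α : Type} (φ : Form α) : Form (α ⊕ α) := φ.map Sum.inr

/-- The simplified transformation `σ*`, with `σ*(¬ψ) = ¬ψ′`. -/
def sigmaStar {α : Type} : Form α → Form (α ⊕ α)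
  | .bot => .bot
  | .top => .top
  | .atom a => .atom (Sum.inl a)
  | .neg ψ => .neg (primed ψ)
  | .conj φ ψ => .conj (sigmaStar φ) (sigmaStar ψ)
  | .disj φ ψ => .disj (sigmaStar φ) (sigmaStar ψ)
  | .impl φ ψ => .conj (.impl (sigmaStar φ) (sigmaStar ψ)) (.impl (primed φ) (primed ψ))

/-- The transformation `σ`, with `σ(¬ψ) = ¬σ(ψ) ∧ ¬ψ′`. -/
def sigmaFull {α : Type} : Form α → Form (α ⊕ α)
  | .bot => .bot
  | .top => .top
  | .atom a => .atom (Sum.inl a)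
  | .neg ψ => .conj (.neg (sigmaFull ψ)) (.neg (primed ψ))
  | .conj φ ψ => .conj (sigmaFull φ) (sigmaFull ψ)
  | .disj φ ψ => .disj (sigmaFull φ) (sigmaFull ψ)
  | .impl φ ψ => .conj (.impl (sigmaFull φ) (sigmaFull ψ)) (.impl (primed φ) (primed ψ))

/-- The classical interpretation `I = H ∪ T′` over `𝒫 ∪ 𝒫′` corresponding to `⟨H,T⟩`. -/
def htToClassical {α : Type} (H T : Set α) : Set (α ⊕ α) :=
  (Sum.inl '' H) ∪ (Sum.inr '' T)

/-- `I` satisfies all axioms `p → p′` for `p ∈ 𝒫`. -/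
def primeAxioms {α : Type} (I : Set (α ⊕ α)) : Prop :=
  ∀ a : α, Sum.inl a ∈ I → Sum.inr a ∈ I

/-- Logical complexity: number of occurrences of `¬, ∧, ∨, →`. -/
def lc {α : Type} : Form α → ℕ
  | .bot => 0
  | .top => 0
  | .atom _ => 0
  | .neg φ => 1 + lc φ
  | .conj φ ψ => 1 + lc φ + lc ψ
  | .disj φ ψ => 1 + lc φ + lc ψ
  | .impl φ ψ => 1 + lc φ + lc ψ

/-- Number of implication occurrences in a formula. -/
def implCount {α : Type} : Form α → ℕ
  | .bot => 0
  | .top => 0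
  | .atom _ => 0
  | .neg φ => implCount φ
  | .conj φ ψ => implCount φ + implCount ψ
  | .disj φ ψ => implCount φ + implCount ψ
  | .impl φ ψ => 1 + implCount φ + implCount ψ


/-!
Reading `I ⊆ 𝒫 ∪ 𝒫′` as the pair `⟨H, T⟩` with `H = I ∩ 𝒫` and `T′ = I ∩ 𝒫′`, the axioms
`p → p′` say exactly `H ⊆ T`, and `I ⊨ σ*(φ)` iff `⟨H, T⟩ ⊨ φ`: the total world `⟨T, T⟩` of
here-and-there is classical, so the primed copies in `σ*` evaluate the clauses that HT checks
at `⟨T, T⟩`. Both sides of the equivalence therefore quantify over the same pairs.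
-/

lemma cSat_map {α β : Type} (f : α → β) (I : Set β) (φ : Form α) :
    cSat I (φ.map f) ↔ cSat (f ⁻¹' I) φ := by
  induction φ <;> simp [Form.map, cSat, *]

lemma htSat_self_iff_cSat {α : Type} (T : Set α) (φ : Form α) :
    htSat T T φ ↔ cSat T φ := by
  induction φ <;> simp [htSat, cSat, *]

lemma cSat_sigmaStar_iff_htSat {α : Type} (I : Set (α ⊕ α)) (φ : Form α) :
    cSat I (sigmaStar φ) ↔ htSat (Sum.inl ⁻¹' I) (Sum.inr ⁻¹' I) φ := by
  induction φ <;> simp [sigmaStar, cSat, htSat, primed, cSat_map, htSat_self_iff_cSat, *]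

lemma primeAxioms_iff_preimage_subset {α : Type} (I : Set (α ⊕ α)) :
    primeAxioms I ↔ Sum.inl ⁻¹' I ⊆ Sum.inr ⁻¹' I :=
  Iff.rfl

@[simp]
lemma preimage_inl_htToClassical {α : Type} (H T : Set α) :
    Sum.inl ⁻¹' htToClassical H T = H := by
  ext a; simp [htToClassical]

@[simp]
lemma preimage_inr_htToClassical {α : Type} (H T : Set α) :
    Sum.inr ⁻¹' htToClassical H T = T := by
  ext a; simp [htToClassical]

theorem stmt6 {α : Type} (φ₁ φ₂ : Form α) :
    (∀ H T : Set α, H ⊆ T → (htSat H T φ₁ ↔ htSat H T φ₂)) ↔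
    (∀ I : Set (α ⊕ α), primeAxioms I →
      (cSat I (sigmaStar φ₁) ↔ cSat I (sigmaStar φ₂))) := by
  simp only [cSat_sigmaStar_iff_htSat, primeAxioms_iff_preimage_subset]
  refine ⟨fun hHT I hI => hHT _ _ hI, fun hClassical H T hHT => ?_⟩
  simpa using hClassical (htToClassical H T) (by simpa using hHT)
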